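/- Let G be a finite nonempty linearly ordered set, Π₀ a finite nonempty set, and for each π ∈ Π₀ a probability mass function μ_π : G → ℝ with CDF F_π(g) = ∑_{g' ≤ g} μ_π(g') and strict CDF F⁻_π(g) = ∑_{g' < g} μ_π(g'). Let 0 < τ_1 < … < τ_L ≤ 1, and define recursively q*_i = max_{π ∈ Π_{i-1}} q_{τ_i}(F_π) and Π_i = {π ∈ Π_{i-1} : F⁻_π(q*_i) = min_{π' ∈ Π_{i-1}} F⁻_{π'}(q*_i)}. Define also the two-stage sets Π̂_i = {π ∈ Π_{i-1} : q_{τ_i}(F_π) = q*_i} and Π'_i = {π ∈ Π̂_i : F⁻_π(q*_i) = min_{π' ∈ Π̂_i} F⁻_{π'}(q*_i)}. Then Π'_i = Π_i for every i = 1, …, L; that is, minimizing the strict CDF at q*_i directly over Π_{i-1} produces the same policy class as first restricting to τ_i-quantile maximizers and then minimizing the strict CDF at q*_i. -/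

import Mathlib

open Classical

/-- The τ-lower quantile of `F : G → ℝ` on a finite nonempty linear order `G`:
the least `g` with `τ ≤ F g` (junk value `max G` if no such `g` exists). -/
noncomputable def lowQ {G : Type*} [Fintype G] [LinearOrder G] [Nonempty G]
    (τ : ℝ) (F : G → ℝ) : G :=
  if h : (Finset.univ.filter fun g => τ ≤ F g).Nonempty
  then (Finset.univ.filter fun g => τ ≤ F g).min' h
  else Finset.univ.max' Finset.univ_nonempty

/-- The CDF of a mass function `μ` on a finite linear order: `F(g) = ∑_{g' ≤ g} μ g'`. -/
noncomputable def cdf {G : Type*} [Fintype G] [LinearOrder G] (μ : G → ℝ) (g : G) : ℝ :=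
  ∑ g' ∈ Finset.univ.filter (fun g' => g' ≤ g), μ g'

/-- The strict CDF of a mass function `μ`: `F⁻(g) = ∑_{g' < g} μ g'`. -/
noncomputable def scdf {G : Type*} [Fintype G] [LinearOrder G] (μ : G → ℝ) (g : G) : ℝ :=
  ∑ g' ∈ Finset.univ.filter (fun g' => g' < g), μ g'

/-- The recursive construction: `qPi μ τ 0 = (junk, Π₀)` and, for `i ≥ 1`,
`qPi μ τ i = (q*_i, Π_i)` where `q*_i = max_{π ∈ Π_{i-1}} q_{τ_i}(F_π)` and
`Π_i` is the set of `π ∈ Π_{i-1}` minimizing the strict CDF `F⁻_π(q*_i)` over `Π_{i-1}`. -/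
noncomputable def qPi {G P : Type*} [Fintype G] [LinearOrder G] [Nonempty G] [Fintype P]
    (μ : P → G → ℝ) (τ : ℕ → ℝ) : ℕ → G × Finset P
  | 0 => (Classical.arbitrary G, Finset.univ)
  | i + 1 =>
    let prev := (qPi μ τ i).2
    let q := WithBot.unbotD (Classical.arbitrary G)
      ((prev.image fun π => lowQ (τ (i + 1)) (cdf (μ π))).max)
    (q, prev.filter fun π => ∀ π' ∈ prev, scdf (μ π) q ≤ scdf (μ π') q)

/-! With `q = q*_i`, a policy `π ∈ Π_{i-1}` has `q_{τ_i}(F_π) ≤ q`, and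
`F⁻_π(q) < τ_i ↔ q ≤ q_{τ_i}(F_π)`. Hence `Π̂_i` is exactly the nonempty sublevel set
`{π : F⁻_π(q) < τ_i}`, and every other policy has `F⁻_π(q) ≥ τ_i`, so it cannot minimize
`F⁻_π(q)`; minimizing over `Π̂_i` or over `Π_{i-1}` is the same. -/

theorem Finset.filter_forall_le_filter_lt {ι α : Type*} [LinearOrder α] {S : Finset ι}
    {φ : ι → α} {c : α} (h : ∃ i ∈ S, φ i < c) :
    ((S.filter (φ · < c)).filter fun i => ∀ j ∈ S.filter (φ · < c), φ i ≤ φ j) =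
      S.filter fun i => ∀ j ∈ S, φ i ≤ φ j := by
  obtain ⟨i₀, hi₀, hφi₀⟩ := h
  ext i
  simp only [Finset.mem_filter]
  constructor
  · rintro ⟨⟨hi, hφi⟩, hmin⟩
    refine ⟨hi, fun j hj => ?_⟩
    by_cases hφj : φ j < c
    · exact hmin j ⟨hj, hφj⟩
    · exact (hφi.trans_le (not_lt.mp hφj)).le
  · rintro ⟨hi, hmin⟩
    exact ⟨⟨hi, (hmin i₀ hi₀).trans_lt hφi₀⟩, fun j hj => hmin j hj.1⟩

section Quantile

variable {G : Type*} [Fintype G] [LinearOrder G]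

theorem cdf_le_scdf {μ : G → ℝ} (hμ : ∀ g, 0 ≤ μ g) {g q : G} (h : g < q) :
    cdf μ g ≤ scdf μ q :=
  Finset.sum_le_sum_of_subset_of_nonneg
    (Finset.monotone_filter_right _ fun _ _ hg => hg.trans_lt h) fun g _ _ => hμ g

theorem scdf_mono {μ : G → ℝ} (hμ : ∀ g, 0 ≤ μ g) : Monotone (scdf μ) :=
  fun _ _ h => Finset.sum_le_sum_of_subset_of_nonneg
    (Finset.monotone_filter_right _ fun _ _ hg => hg.trans_le h) fun g _ _ => hμ g

variable [Nonempty G]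

theorem exists_le_cdf {μ : G → ℝ} (hsum : ∑ g, μ g = 1) {τ : ℝ} (hτ : τ ≤ 1) :
    (Finset.univ.filter fun g => τ ≤ cdf μ g).Nonempty := by
  refine ⟨Finset.univ.max' Finset.univ_nonempty,
    Finset.mem_filter.2 ⟨Finset.mem_univ _, ?_⟩⟩
  rwa [cdf, Finset.filter_true_of_mem fun g _ => Finset.le_max' _ _ (Finset.mem_univ g), hsum]

theorem le_lowQ {τ : ℝ} {F : G → ℝ} (h : (Finset.univ.filter fun g => τ ≤ F g).Nonempty) :
    τ ≤ F (lowQ τ F) := by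
  rw [lowQ, dif_pos h]
  exact (Finset.mem_filter.1 (Finset.min'_mem _ h)).2

theorem lowQ_le {τ : ℝ} {F : G → ℝ} (h : (Finset.univ.filter fun g => τ ≤ F g).Nonempty)
    {g : G} (hg : τ ≤ F g) : lowQ τ F ≤ g := by
  rw [lowQ, dif_pos h]
  exact Finset.min'_le _ _ (Finset.mem_filter.2 ⟨Finset.mem_univ g, hg⟩)

theorem scdf_lowQ_lt {μ : G → ℝ} {τ : ℝ} (hτ : 0 < τ)
    (h : (Finset.univ.filter fun g => τ ≤ cdf μ g).Nonempty) :
    scdf μ (lowQ τ (cdf μ)) < τ := by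
  set q := lowQ τ (cdf μ)
  by_contra! hq
  have hbelow : (Finset.univ.filter fun g => g < q).Nonempty := by
    by_contra hempty
    rw [Finset.not_nonempty_iff_eq_empty] at hempty
    rw [scdf, hempty, Finset.sum_empty] at hq
    exact hq.not_gt hτ
  -- Below `q` the strict CDF is the CDF at the predecessor `g₀` of `q`.
  set g₀ := (Finset.univ.filter fun g => g < q).max' hbelow
  have hg₀ : g₀ < q := (Finset.mem_filter.1 (Finset.max'_mem _ hbelow)).2
  have hscdf : scdf μ q = cdf μ g₀ := by
    refine Finset.sum_congr (Finset.filter_congr fun g _ => ⟨fun hg => ?_, ?_⟩) fun _ _ => rfl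
    · exact Finset.le_max' _ _ (Finset.mem_filter.2 ⟨Finset.mem_univ g, hg⟩)
    · exact fun hg => hg.trans_lt hg₀
  exact (lowQ_le h (hscdf ▸ hq)).not_gt hg₀

theorem scdf_lt_iff_le_lowQ {μ : G → ℝ} (hμ : ∀ g, 0 ≤ μ g) (hsum : ∑ g, μ g = 1)
    {τ : ℝ} (hτ₀ : 0 < τ) (hτ₁ : τ ≤ 1) {q : G} :
    scdf μ q < τ ↔ q ≤ lowQ τ (cdf μ) := by
  have h := exists_le_cdf hsum hτ₁
  refine ⟨fun hq => not_lt.mp fun hlt => ?_, fun hq => ?_⟩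
  · exact ((le_lowQ h).trans (cdf_le_scdf hμ hlt)).not_gt hq
  · exact (scdf_mono hμ hq).trans_lt (scdf_lowQ_lt hτ₀ h)

end Quantile

section Recursion

variable {G P : Type*} [Fintype G] [LinearOrder G] [Nonempty G] [Fintype P]

theorem qPi_succ_fst {μ : P → G → ℝ} {τ : ℕ → ℝ} {i : ℕ}
    (h : (qPi μ τ i).2.Nonempty) :
    (qPi μ τ (i + 1)).1 =
      ((qPi μ τ i).2.image fun π => lowQ (τ (i + 1)) (cdf (μ π))).max' (h.image _) := by
  rw [qPi, ← Finset.coe_max' (h.image _), WithBot.unbotD_coe]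

theorem lowQ_le_qPi_succ_fst {μ : P → G → ℝ} {τ : ℕ → ℝ} {i : ℕ} {π : P}
    (hπ : π ∈ (qPi μ τ i).2) : lowQ (τ (i + 1)) (cdf (μ π)) ≤ (qPi μ τ (i + 1)).1 := by
  rw [qPi_succ_fst ⟨π, hπ⟩]
  exact Finset.le_max' _ _ (Finset.mem_image_of_mem (fun π => lowQ (τ (i + 1)) (cdf (μ π))) hπ)

theorem exists_lowQ_eq_qPi_succ_fst {μ : P → G → ℝ} {τ : ℕ → ℝ} {i : ℕ}
    (h : (qPi μ τ i).2.Nonempty) :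
    ∃ π ∈ (qPi μ τ i).2, lowQ (τ (i + 1)) (cdf (μ π)) = (qPi μ τ (i + 1)).1 := by
  rw [qPi_succ_fst h]
  exact Finset.mem_image.1 (Finset.max'_mem _ _)

theorem qPi_succ_snd (μ : P → G → ℝ) (τ : ℕ → ℝ) (i : ℕ) :
    (qPi μ τ (i + 1)).2 = (qPi μ τ i).2.filter fun π => ∀ π' ∈ (qPi μ τ i).2,
      scdf (μ π) (qPi μ τ (i + 1)).1 ≤ scdf (μ π') (qPi μ τ (i + 1)).1 :=
  rfl

end Recursion

theorem two_stage_argmin_eq_direct_argmin_general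
    {G P : Type*} [Fintype G] [LinearOrder G] [Nonempty G]
    [Fintype P]
    (μ : P → G → ℝ)
    (hpos : ∀ π g, 0 ≤ μ π g) (hsum : ∀ π, ∑ g, μ π g = 1)
    (L : ℕ) (τ : ℕ → ℝ)
    (hτpos : ∀ i, 1 ≤ i → i ≤ L → 0 < τ i)
    (hτone : ∀ i, 1 ≤ i → i ≤ L → τ i ≤ 1) :
    ∀ i, 1 ≤ i → i ≤ L →
      (let prev := (qPi μ τ (i - 1)).2
       let q := (qPi μ τ i).1
       let hatPi := prev.filter fun π => lowQ (τ i) (cdf (μ π)) = q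
       hatPi.filter fun π => ∀ π' ∈ hatPi, scdf (μ π) q ≤ scdf (μ π') q)
      = (qPi μ τ i).2 := by
  intro i hi hiL
  obtain ⟨j, rfl⟩ := Nat.exists_eq_add_of_le' hi
  simp only [Nat.add_sub_cancel, qPi_succ_snd μ τ j]
  set S := (qPi μ τ j).2
  set q := (qPi μ τ (j + 1)).1
  rcases S.eq_empty_or_nonempty with hS | hS
  · simp [hS]
  have hhat : ∀ π ∈ S, lowQ (τ (j + 1)) (cdf (μ π)) = q ↔ scdf (μ π) q < τ (j + 1) :=
    fun π hπ => (lowQ_le_qPi_succ_fst hπ).ge_iff_eq.symm.trans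
      (scdf_lt_iff_le_lowQ (hpos π) (hsum π) (hτpos _ hi hiL) (hτone _ hi hiL)).symm
  obtain ⟨π₀, hπ₀, hπ₀q⟩ := exists_lowQ_eq_qPi_succ_fst hS
  rw [Finset.filter_congr hhat]
  -- `convert` only reconciles the classical and the order-derived decidability instances.
  convert Finset.filter_forall_le_filter_lt (φ := fun π => scdf (μ π) q)
    ⟨π₀, hπ₀, (hhat π₀ hπ₀).1 hπ₀q⟩

/-- first restricting to the `τ_i`-quantile maximizers `Π̂_i` and then
minimizing the strict CDF at `q*_i` yields exactly the same class `Π_i` as minimizing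
the strict CDF at `q*_i` directly over `Π_{i-1}`. -/
theorem two_stage_argmin_eq_direct_argmin
    {G P : Type*} [Fintype G] [LinearOrder G] [Nonempty G]
    [Fintype P] [Nonempty P]
    (μ : P → G → ℝ)
    (hpos : ∀ π g, 0 ≤ μ π g) (hsum : ∀ π, ∑ g, μ π g = 1)
    (L : ℕ) (τ : ℕ → ℝ)
    (hτpos : ∀ i, 1 ≤ i → i ≤ L → 0 < τ i)
    (hτmono : ∀ i j, 1 ≤ i → i < j → j ≤ L → τ i < τ j)
    (hτone : ∀ i, 1 ≤ i → i ≤ L → τ i ≤ 1) :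
    ∀ i, 1 ≤ i → i ≤ L →
      (let prev := (qPi μ τ (i - 1)).2
       let q := (qPi μ τ i).1
       let hatPi := prev.filter fun π => lowQ (τ i) (cdf (μ π)) = q
       hatPi.filter fun π => ∀ π' ∈ hatPi, scdf (μ π) q ≤ scdf (μ π') q)
      = (qPi μ τ i).2 :=
  two_stage_argmin_eq_direct_argmin_general μ hpos hsum L τ hτpos hτone
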